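/- Cycle-CTL* does not have the finite-model property: there exists a Cycle-CTL* state formula (namely A G ¬E^cycle ⊤) that is satisfiable in some Kripke structure but is not satisfiable in any Kripke structure with finitely many worlds. -/

import Mathlib

/-!
On `ℕ` with the successor relation every path is strictly increasing, so no world lies on a cycle
and `A G ¬E^cycle ⊤` holds. In a finite structure, by pigeonhole, some path from the initial world
visits a world twice, at positions `a < b`; running around `π a, …, π (b - 1)` forever is a cycle
through a world on that path, which `G ¬E^cycle ⊤` forbids.
-/

namespace CycleCTL

universe u v

/-- A Kripke structure over a set `AP` of atomic propositions. -/
structure Kripke (AP : Type) : Type (u + 1) where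
  World : Type u
  init : World
  R : World → World → Prop
  label : World → Set AP
  serial : ∀ w, ∃ v, R w v

variable {AP : Type}

/-- An (infinite) path of a Kripke structure. -/
def IsPath (K : Kripke.{u} AP) (π : ℕ → K.World) : Prop :=
  ∀ i, K.R (π i) (π (i + 1))

/-- A cycle: a path visiting its first world infinitely often. -/
def IsCycle (K : Kripke.{u} AP) (π : ℕ → K.World) : Prop :=
  IsPath K π ∧ ∀ i, ∃ j, i < j ∧ π j = π 0

mutual
  /-- State formulas of Cycle-CTL*. -/
  inductive StateForm (AP : Type) : Type where
    | atom : AP → StateForm AP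
    | not  : StateForm AP → StateForm AP
    | and  : StateForm AP → StateForm AP → StateForm AP
    | or   : StateForm AP → StateForm AP → StateForm AP
    | E    : PathForm AP → StateForm AP
    | A    : PathForm AP → StateForm AP
    | Ec   : PathForm AP → StateForm AP
    | Ac   : PathForm AP → StateForm AP
  /-- Path formulas of Cycle-CTL*. -/
  inductive PathForm (AP : Type) : Type where
    | state : StateForm AP → PathForm AP
    | not   : PathForm AP → PathForm AP
    | and   : PathForm AP → PathForm AP → PathForm AP
    | or    : PathForm AP → PathForm AP → PathForm AP
    | next  : PathForm AP → PathForm AP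
    | untl  : PathForm AP → PathForm AP → PathForm AP
end

mutual
  /-- Satisfaction of a state formula at a world. -/
  def SatS (K : Kripke.{u} AP) : K.World → StateForm AP → Prop
    | w, .atom p => p ∈ K.label w
    | w, .not φ => ¬ SatS K w φ
    | w, .and φ₁ φ₂ => SatS K w φ₁ ∧ SatS K w φ₂
    | w, .or φ₁ φ₂ => SatS K w φ₁ ∨ SatS K w φ₂
    | w, .E ψ => ∃ π, IsPath K π ∧ π 0 = w ∧ SatP K π 0 ψ
    | w, .A ψ => ∀ π, IsPath K π → π 0 = w → SatP K π 0 ψ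
    | w, .Ec ψ => ∃ π, IsCycle K π ∧ π 0 = w ∧ SatP K π 0 ψ
    | w, .Ac ψ => ∀ π, IsCycle K π → π 0 = w → SatP K π 0 ψ
  /-- Satisfaction of a path formula on a path at a position. -/
  def SatP (K : Kripke.{u} AP) : (ℕ → K.World) → ℕ → PathForm AP → Prop
    | π, i, .state φ => SatS K (π i) φ
    | π, i, .not ψ => ¬ SatP K π i ψ
    | π, i, .and ψ₁ ψ₂ => SatP K π i ψ₁ ∧ SatP K π i ψ₂
    | π, i, .or ψ₁ ψ₂ => SatP K π i ψ₁ ∨ SatP K π i ψ₂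
    | π, i, .next ψ => SatP K π (i + 1) ψ
    | π, i, .untl ψ₁ ψ₂ => ∃ k, SatP K π (i + k) ψ₂ ∧ ∀ j < k, SatP K π (i + j) ψ₁
end

/-- `K ⊨ φ` : satisfaction at the initial world. -/
def Sat (K : Kripke.{u} AP) (φ : StateForm AP) : Prop := SatS K K.init φ

/-- `⊤` as a path formula, abbreviating `p ∨ ¬p`. -/
def topP (p : AP) : PathForm AP := .or (.state (.atom p)) (.not (.state (.atom p)))

/-- `F ψ` abbreviates `⊤ U ψ`. -/
def FP (p : AP) (ψ : PathForm AP) : PathForm AP := .untl (topP p) ψ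

/-- `G ψ` abbreviates `¬(⊤ U ¬ψ)`. -/
def GP (p : AP) (ψ : PathForm AP) : PathForm AP := .not (FP p (.not ψ))


section Semantics

variable {K : Kripke.{u} AP}

@[simp]
lemma satP_topP (p : AP) (π : ℕ → K.World) (i : ℕ) : SatP K π i (topP p) := by
  simp only [topP, SatP]
  exact em _

lemma satP_GP_iff {p : AP} {ψ : PathForm AP} {π : ℕ → K.World} {i : ℕ} :
    SatP K π i (GP p ψ) ↔ ∀ k, SatP K π (i + k) ψ := by
  simp [GP, FP, SatP]

lemma satS_A_G_not_Ec_topP_iff {p : AP} {w : K.World} :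
    SatS K w (.A (GP p (.state (.not (.Ec (topP p)))))) ↔
      ∀ π, IsPath K π → π 0 = w → ∀ k ρ, IsCycle K ρ → ρ 0 ≠ π k := by
  simp [SatS, satP_GP_iff, SatP]

end Semantics

lemma exists_isPath (K : Kripke.{u} AP) (w : K.World) : ∃ π, IsPath K π ∧ π 0 = w := by
  choose next hnext using K.serial
  exact ⟨fun n => next^[n] w, fun i => by simpa only [Function.iterate_succ_apply'] using hnext _, rfl⟩

namespace IsPath

variable {K : Kripke.{u} AP} {π : ℕ → K.World}

lemma exists_isCycle_of_lt_of_eq (hπ : IsPath K π) {a b : ℕ} (hab : a < b) (heq : π a = π b) :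
    ∃ ρ, IsCycle K ρ ∧ ρ 0 = π a := by
  obtain ⟨d, rfl⟩ := Nat.exists_eq_add_of_lt hab
  refine ⟨fun i => π (a + i % (d + 1)), ⟨fun i => ?_, fun i => ⟨(i + 1) * (d + 1), ?_, ?_⟩⟩, by simp⟩
  · show K.R (π (a + i % (d + 1))) (π (a + (i + 1) % (d + 1)))
    rw [← Nat.mod_add_mod]
    rcases Nat.lt_or_eq_of_le (show i % (d + 1) + 1 ≤ d + 1 from Nat.mod_lt i d.add_one_pos)
      with hlt | hwrap
    · rw [Nat.mod_eq_of_lt hlt]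
      exact hπ _
    · rw [hwrap, Nat.mod_self, add_zero, heq, show a + d + 1 = a + i % (d + 1) + 1 by omega]
      exact hπ _
  · nlinarith
  · simp

lemma exists_isCycle_of_finite [Finite K.World] (hπ : IsPath K π) :
    ∃ k ρ, IsCycle K ρ ∧ ρ 0 = π k := by
  obtain ⟨a, b, hab, heq⟩ := Set.finite_univ.exists_lt_map_eq_of_forall_mem (f := π)
    fun _ => Set.mem_univ _
  exact ⟨a, hπ.exists_isCycle_of_lt_of_eq hab heq⟩

end IsPath

def succKripke (AP : Type) : Kripke.{0} AP where
  World := ℕ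
  init := 0
  R m n := n = m + 1
  label _ := ∅
  serial m := ⟨m + 1, rfl⟩

lemma succKripke_not_isCycle (ρ : ℕ → ℕ) : ¬ IsCycle (succKripke AP) ρ := by
  rintro ⟨hρ, hret⟩
  have hρ_add : ∀ i, ρ i = ρ 0 + i := fun i => by
    induction i with
    | zero => rfl
    | succ n ih => rw [hρ n, ih]; rfl
  obtain ⟨j, hj, hρj⟩ := hret 0
  have : ρ 0 + j = ρ 0 := (hρ_add j).symm.trans hρj
  omega

/-- Cycle-CTL* lacks the finite-model property: the formula `A G ¬ E^cycle ⊤`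
is satisfiable, but not satisfiable in any Kripke structure with finitely many worlds. -/
theorem stmt3 :
    ∃ φ : StateForm Unit,
      φ = .A (GP () (.state (.not (.Ec (topP ()))))) ∧
      (∃ K : Kripke.{0} Unit, Sat K φ) ∧
      (∀ K : Kripke.{u} Unit, Finite K.World → ¬ Sat K φ) := by
  refine ⟨_, rfl, ⟨succKripke Unit, ?_⟩, fun K _ hsat => ?_⟩
  · rw [Sat, satS_A_G_not_Ec_topP_iff]
    exact fun _ _ _ _ ρ hρ => absurd hρ (succKripke_not_isCycle ρ)
  · obtain ⟨π, hπ, hπ0⟩ := exists_isPath K K.init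
    obtain ⟨k, ρ, hρ, hρk⟩ := hπ.exists_isCycle_of_finite
    exact satS_A_G_not_Ec_topP_iff.1 hsat π hπ hπ0 k ρ hρ hρk

end CycleCTL
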